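/- Let {S_ι : ι ∈ I} be an infinite collection of semigroups each with identity, nets F_ι in P_f(S_ι), and let F be the product net determined by {F_ι}. For subsets A_ι ⊆ S_ι, d*_F(∏_{ι∈I} A_ι) = ∏_{ι∈I} d*_{F_ι}(A_ι), where the infinite product of numbers in [0,1] is defined as inf over finite subproducts. -/

import Mathlib

open scoped Classical symmDiff

/-- The translate `F · s` of a finite piece `F` by an element of `S ∪ {1}`
(`none` meaning "no shift"). -/
def netShift {S : Type*} [Mul S] (F : Set S) : Option S → Set S
  | none => F
  | some t => (· * t) '' F

/-- Upper Banach density of `A ⊆ S` with respect to a net `F = ⟨F i⟩` of finite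
nonempty subsets of `S`, indexed by a directed preorder `I`. -/
noncomputable def uBD {S : Type*} [Mul S] {I : Type*} [Preorder I]
    (F : I → Set S) (A : Set S) : ℝ :=
  sSup {α : ℝ | ∀ i₀ : I, ∃ i, i₀ ≤ i ∧ ∃ s : Option S,
    α * ((F i).ncard : ℝ) ≤ ((A ∩ netShift (F i) s).ncard : ℝ)}

/-- Extension of the net `F` on index set `J` to `J' = J ∪ {1}`, where the
distinguished index `⊥` carries the singleton `{1}`. -/
noncomputable def extNet {S : Type*} [One S] {J : Type*} (F : J → Set S) :
    WithBot J → Set S :=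
  WithBot.recBotCoe ({1} : Set S) F

/-- The index set `𝔍` of the product net: vectors of extended indices that differ
from the distinguished index `⊥` in only finitely many coordinates, ordered
coordinatewise. -/
abbrev ProdIdx {ι : Type*} (J : ι → Type*) : Type _ :=
  {j : ∀ i, WithBot (J i) // {i | j i ≠ ⊥}.Finite}

/-- The product net determined by the family of nets `F i`. -/
noncomputable def prodNet {ι : Type*} {S : ι → Type*} [∀ i, One (S i)]
    {J : ι → Type*} (F : ∀ i, J i → Set (S i)) :
    ProdIdx J → Set (∀ i, S i) :=
  fun j => Set.pi Set.univ fun i => extNet (F i) (j.1 i)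


/-!
Both inequalities reduce to one finite computation. A piece of the product net differs from `{1}`
only in finitely many coordinates `H`, so its size, and the size of the part of `∏ A ι` it sees
after a shift, are the products over `H` of the corresponding coordinate sizes. For `≤`, enlarge
the index in the coordinates of a finite `G` until every coordinate piece sees at most
`d*(A ι) + ε` of itself; the product piece then sees at most `∏_G (d*(A ι) + ε)` of itself.
For `≥`, given an index with support `H`, choose in each coordinate of `H` a piece and shift seeing
almost `d*(A ι)` of it, and in every other coordinate the piece `{1}` shifted into `A ι`.
-/

open Filter Topology

section NetShift

variable {S : Type*}

lemma ncard_inter_netShift_le [Mul S] {F : Set S} (hF : F.Finite) (A : Set S) (s : Option S) :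
    (A ∩ netShift F s).ncard ≤ F.ncard := by
  cases s with
  | none => exact Set.ncard_inter_le_ncard_right A F hF
  | some t =>
    exact (Set.ncard_inter_le_ncard_right _ _ (hF.image _)).trans (Set.ncard_image_le hF)

lemma netShift_eq_image_getD [MulOneClass S] (F : Set S) (s : Option S) :
    netShift F s = (· * s.getD 1) '' F := by
  cases s <;> simp [netShift]

lemma netShift_univ_pi {ι : Type*} {S : ι → Type*} [∀ i, Mul (S i)] (B : ∀ i, Set (S i))
    (s : Option (∀ i, S i)) :
    netShift (Set.pi Set.univ B) s = Set.pi Set.univ fun i => netShift (B i) (s.map (· i)) := by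
  cases s with
  | none => rfl
  | some t => exact Set.piMap_image_univ_pi (fun i => (· * t i)) B

end NetShift

section Density

variable {S : Type*} [Mul S] {I : Type*} [Preorder I] {F : I → Set S} {A : Set S}

/-- The set whose supremum is `uBD F A`. -/
def uBDSet (F : I → Set S) (A : Set S) : Set ℝ :=
  {α : ℝ | ∀ i₀ : I, ∃ i, i₀ ≤ i ∧ ∃ s : Option S,
    α * ((F i).ncard : ℝ) ≤ ((A ∩ netShift (F i) s).ncard : ℝ)}

lemma mem_uBDSet_of_nonpos {α : ℝ} (hα : α ≤ 0) : α ∈ uBDSet F A :=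
  fun i₀ => ⟨i₀, le_rfl, none,
    (mul_nonpos_of_nonpos_of_nonneg hα (Nat.cast_nonneg _)).trans (Nat.cast_nonneg _)⟩

lemma uBDSet_nonempty : (uBDSet F A).Nonempty := ⟨0, mem_uBDSet_of_nonpos le_rfl⟩

lemma uBD_le_of_forall_mem_uBDSet {c : ℝ} (h : ∀ α ∈ uBDSet F A, α ≤ c) : uBD F A ≤ c :=
  csSup_le uBDSet_nonempty h

lemma mem_uBDSet_of_lt_uBD {α : ℝ} (h : α < uBD F A) : α ∈ uBDSet F A := by
  obtain ⟨β, hβ, hαβ⟩ := exists_lt_of_lt_csSup uBDSet_nonempty h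
  intro i₀
  obtain ⟨i, hi, s, hs⟩ := hβ i₀
  exact ⟨i, hi, s, (mul_le_mul_of_nonneg_right hαβ.le (Nat.cast_nonneg _)).trans hs⟩

variable [Nonempty I] (hfin : ∀ i, (F i).Finite) (hne : ∀ i, (F i).Nonempty)
include hfin hne

lemma le_one_of_mem_uBDSet {α : ℝ} (hα : α ∈ uBDSet F A) : α ≤ 1 := by
  obtain ⟨i, -, s, hs⟩ := hα (Classical.arbitrary I)
  have hpos : (0 : ℝ) < (F i).ncard := by exact_mod_cast (Set.ncard_pos (hfin i)).mpr (hne i)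
  have hle : ((A ∩ netShift (F i) s).ncard : ℝ) ≤ (F i).ncard := by
    exact_mod_cast ncard_inter_netShift_le (hfin i) A s
  exact le_of_mul_le_mul_right (by simpa using hs.trans hle) hpos

lemma nonempty_of_mem_uBDSet {α : ℝ} (hα : α ∈ uBDSet F A) (h0 : 0 < α) : A.Nonempty := by
  obtain ⟨i, -, s, hs⟩ := hα (Classical.arbitrary I)
  have hpos : (0 : ℝ) < (F i).ncard := by exact_mod_cast (Set.ncard_pos (hfin i)).mpr (hne i)
  have hcount : (A ∩ netShift (F i) s).ncard ≠ 0 := by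
    exact_mod_cast ((mul_pos h0 hpos).trans_le hs).ne'
  exact (Set.nonempty_of_ncard_ne_zero hcount).mono Set.inter_subset_left

lemma le_uBD {α : ℝ} (hα : α ∈ uBDSet F A) : α ≤ uBD F A :=
  le_csSup ⟨1, fun _ => le_one_of_mem_uBDSet hfin hne⟩ hα

lemma uBD_nonneg : 0 ≤ uBD F A :=
  le_uBD hfin hne (mem_uBDSet_of_nonpos le_rfl)

lemma uBD_le_one : uBD F A ≤ 1 :=
  uBD_le_of_forall_mem_uBDSet fun _ => le_one_of_mem_uBDSet hfin hne

lemma exists_forall_ge_ncard_inter_netShift_le {ε : ℝ} (hε : 0 < ε) :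
    ∃ i₀ : I, ∀ i, i₀ ≤ i → ∀ s : Option S,
      ((A ∩ netShift (F i) s).ncard : ℝ) ≤ (uBD F A + ε) * (F i).ncard := by
  by_contra! h
  have hmem : uBD F A + ε ∈ uBDSet F A := fun i₀ =>
    let ⟨i, hi, s, hs⟩ := h i₀
    ⟨i, hi, s, hs.le⟩
  linarith [le_uBD hfin hne hmem]

end Density

lemma exists_mul_of_mem_uBDSet {S : Type*} [MulOneClass S] {I : Type*} [Preorder I]
    {F : I → Set S} {A : Set S} {α : ℝ} (hα : α ∈ uBDSet F A) (i₀ : I) :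
    ∃ i, i₀ ≤ i ∧ ∃ t : S, α * ((F i).ncard : ℝ) ≤ ((A ∩ (· * t) '' F i).ncard : ℝ) := by
  obtain ⟨i, hi, s, hs⟩ := hα i₀
  exact ⟨i, hi, s.getD 1, netShift_eq_image_getD (F i) s ▸ hs⟩

section UnivPi

variable {ι : Type*} {S : ι → Type*} {C : ∀ i, Set (S i)} {H : Finset ι}

lemma ncard_univ_pi_of_eq_singleton (hC : ∀ i ∉ H, ∃ c, C i = {c}) :
    (Set.pi Set.univ C).ncard = ∏ i ∈ H, (C i).ncard := by
  have hunique : ∀ i : {i // i ∉ H}, Nonempty (C i) ∧ Subsingleton (C i) := fun i => by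
    obtain ⟨c, hc⟩ := hC i i.2
    rw [hc]
    exact ⟨inferInstance, inferInstance⟩
  have := fun i => (hunique i).1
  have := fun i => (hunique i).2
  calc (Set.pi Set.univ C).ncard
      = Nat.card ((∀ i : {i // i ∈ H}, C i) × (∀ i : {i // i ∉ H}, C i)) :=
        Nat.card_congr ((Equiv.Set.univPi C).trans (Equiv.piEquivPiSubtypeProd (· ∈ H) _))
    _ = ∏ i : {i // i ∈ H}, (C i).ncard := by
        rw [Nat.card_prod, Nat.card_pi, Nat.card_unique, mul_one]
        rfl
    _ = ∏ i ∈ H, (C i).ncard := Finset.prod_coe_sort H fun i => (C i).ncard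

lemma ncard_univ_pi_le (hC : ∀ i ∉ H, (C i).Subsingleton) :
    (Set.pi Set.univ C).ncard ≤ ∏ i ∈ H, (C i).ncard := by
  rcases (Set.pi Set.univ C).eq_empty_or_nonempty with h | ⟨x, hx⟩
  · simp [h]
  · refine (ncard_univ_pi_of_eq_singleton fun i hi => ⟨x i, ?_⟩).le
    exact (hC i hi).eq_singleton_of_mem (hx i (Set.mem_univ i))

end UnivPi

section ExtNet

variable {S : Type*} [One S] {J : Type*} {F : J → Set S}

@[simp] lemma extNet_bot : extNet F ⊥ = {1} := rfl

@[simp] lemma extNet_coe (j : J) : extNet F j = F j := rfl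

lemma extNet_nonempty (hne : ∀ j, (F j).Nonempty) (w : WithBot J) : (extNet F w).Nonempty := by
  cases w with
  | bot => exact Set.singleton_nonempty 1
  | coe j => exact hne j

lemma ncard_extNet_pos (hfin : ∀ j, (F j).Finite) (hne : ∀ j, (F j).Nonempty) (w : WithBot J) :
    0 < (extNet F w).ncard := by
  refine (Set.ncard_pos ?_).mpr (extNet_nonempty hne w)
  cases w with
  | bot => exact Set.finite_singleton 1
  | coe j => exact hfin j

end ExtNet

section ProdNet

variable {ι : Type*} {S : ι → Type*} {J : ι → Type*}

instance : Nonempty (ProdIdx J) := ⟨⟨fun _ => ⊥, by simp⟩⟩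

lemma ncard_prodNet [∀ i, One (S i)] (F : ∀ i, J i → Set (S i)) (j : ProdIdx J) {H : Finset ι}
    (hH : ∀ i ∉ H, j.1 i = ⊥) :
    (prodNet F j).ncard = ∏ i ∈ H, (extNet (F i) (j.1 i)).ncard :=
  ncard_univ_pi_of_eq_singleton fun i hi => ⟨1, by rw [hH i hi, extNet_bot]⟩

lemma univ_pi_inter_netShift_prodNet [∀ i, One (S i)] [∀ i, Mul (S i)]
    (F : ∀ i, J i → Set (S i)) (j : ProdIdx J) (A : ∀ i, Set (S i)) (s : Option (∀ i, S i)) :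
    Set.pi Set.univ A ∩ netShift (prodNet F j) s =
      Set.pi Set.univ fun i => A i ∩ netShift (extNet (F i) (j.1 i)) (s.map (· i)) := by
  rw [prodNet, netShift_univ_pi, Set.pi_inter_distrib]

lemma ncard_univ_pi_inter_netShift_prodNet_le [∀ i, MulOneClass (S i)]
    (F : ∀ i, J i → Set (S i)) (j : ProdIdx J) {H : Finset ι} (hH : ∀ i ∉ H, j.1 i = ⊥)
    (A : ∀ i, Set (S i)) (s : Option (∀ i, S i)) :
    (Set.pi Set.univ A ∩ netShift (prodNet F j) s).ncard ≤
      ∏ i ∈ H, (A i ∩ netShift (extNet (F i) (j.1 i)) (s.map (· i))).ncard := by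
  rw [univ_pi_inter_netShift_prodNet]
  refine ncard_univ_pi_le fun i hi => Set.Subsingleton.anti ?_ Set.inter_subset_right
  rw [hH i hi, extNet_bot, netShift_eq_image_getD, Set.image_singleton]
  exact Set.subsingleton_singleton

lemma prodNet_nonempty [∀ i, One (S i)] {F : ∀ i, J i → Set (S i)}
    (hne : ∀ i j, (F i j).Nonempty) (j : ProdIdx J) : (prodNet F j).Nonempty :=
  Set.univ_pi_nonempty_iff.mpr fun i => extNet_nonempty (hne i) _

lemma prodNet_finite [∀ i, One (S i)] {F : ∀ i, J i → Set (S i)}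
    (hfin : ∀ i j, (F i j).Finite) (hne : ∀ i j, (F i j).Nonempty) (j : ProdIdx J) :
    (prodNet F j).Finite := by
  refine Set.finite_of_ncard_pos ?_
  rw [ncard_prodNet F j (H := j.2.toFinset) fun i hi => by simpa using hi]
  exact Finset.prod_pos fun i _ => ncard_extNet_pos (hfin i) (hne i) _

end ProdNet

lemma le_prod_of_forall_le_prod_add {ι : Type*} {G : Finset ι} {d : ι → ℝ} {x : ℝ}
    (h : ∀ ε > 0, x ≤ ∏ i ∈ G, (d i + ε)) : x ≤ ∏ i ∈ G, d i := by
  have hlim : Tendsto (fun ε : ℝ => ∏ i ∈ G, (d i + ε)) (𝓝 0) (𝓝 (∏ i ∈ G, d i)) :=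
    (continuous_finsetProd G fun i _ => continuous_const.add continuous_id).tendsto' 0 _ (by simp)
  exact ge_of_tendsto (hlim.mono_left (nhdsWithin_le_nhds (s := Set.Ioi 0)))
    (eventually_nhdsWithin_of_forall h)

lemma exists_lt_prod_sub {ι : Type*} {G : Finset ι} {d : ι → ℝ} {α c : ℝ} (hc : 0 < c)
    (h : α < ∏ i ∈ G, d i) : ∃ δ, 0 < δ ∧ δ < c ∧ α < ∏ i ∈ G, (d i - δ) := by
  have hlim : Tendsto (fun δ : ℝ => ∏ i ∈ G, (d i - δ)) (𝓝[>] 0) (𝓝 (∏ i ∈ G, d i)) :=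
    ((continuous_finsetProd G fun i _ => continuous_const.sub continuous_id).tendsto' 0 _
      (by simp)).mono_left nhdsWithin_le_nhds
  obtain ⟨δ, hαδ, hδ⟩ := ((hlim.eventually_const_lt h).and (Ioo_mem_nhdsGT hc)).exists
  exact ⟨δ, hδ.1, hδ.2, hαδ⟩

lemma exists_le_ncard_univ_pi_inter_netShift_prodNet {ι : Type*} {S : ι → Type*}
    [∀ i, MulOneClass (S i)] {J : ι → Type*} [∀ i, Preorder (J i)] {F : ∀ i, J i → Set (S i)}
    {A : ∀ i, Set (S i)} {β : ι → ℝ}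
    (hβ : ∀ i, β i ∈ uBDSet (F i) (A i)) (hβ0 : ∀ i, 0 ≤ β i) (hA : ∀ i, (A i).Nonempty)
    (i₀ : ProdIdx J) :
    ∃ j, i₀ ≤ j ∧ ∃ s, (∏ i ∈ i₀.2.toFinset, β i) * ((prodNet F j).ncard : ℝ) ≤
      ((Set.pi Set.univ A ∩ netShift (prodNet F j) s).ncard : ℝ) := by
  have hcoord : ∀ i, ∃ v : WithBot (J i), i₀.1 i ≤ v ∧ ∃ b : S i,
      (i₀.1 i = ⊥ → v = ⊥ ∧ b ∈ A i) ∧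
      (i₀.1 i ≠ ⊥ → β i * ((extNet (F i) v).ncard : ℝ) ≤
        ((A i ∩ (· * b) '' extNet (F i) v).ncard : ℝ)) := by
    intro i
    cases hw : i₀.1 i with
    | bot => exact ⟨⊥, le_rfl, (hA i).some, fun _ => ⟨rfl, (hA i).some_mem⟩, absurd rfl⟩
    | coe j₀ =>
      obtain ⟨j, hj, t, ht⟩ := exists_mul_of_mem_uBDSet (hβ i) j₀
      exact ⟨j, WithBot.coe_le_coe.mpr hj, t, fun h => absurd h WithBot.coe_ne_bot, fun _ => ht⟩
  choose v hv b hbot hβv using hcoord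
  set H := i₀.2.toFinset
  have hH : ∀ i ∉ H, i₀.1 i = ⊥ := fun i hi => by simpa [H] using hi
  let j : ProdIdx J := ⟨v, i₀.2.subset fun i hi h => hi (hbot i h).1⟩
  have hjH : ∀ i ∉ H, j.1 i = ⊥ := fun i hi => (hbot i (hH i hi)).1
  set B := fun i => extNet (F i) (v i)
  set C := fun i => A i ∩ (· * b i) '' B i
  have hC : Set.pi Set.univ A ∩ netShift (prodNet F j) (some b) = Set.pi Set.univ C :=
    univ_pi_inter_netShift_prodNet F j A (some b)
  have hCH : ∀ i ∉ H, C i = {b i} := fun i hi => by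
    obtain ⟨hvi, hbi⟩ := hbot i (hH i hi)
    simp [C, B, hvi, hbi]
  refine ⟨j, hv, some b, ?_⟩
  rw [hC, ncard_univ_pi_of_eq_singleton fun i hi => ⟨b i, hCH i hi⟩,
    ncard_prodNet F j hjH]
  push_cast
  rw [← Finset.prod_mul_distrib]
  exact Finset.prod_le_prod (fun i _ => by have := hβ0 i; positivity)
    fun i hi => hβv i (by simpa [H] using hi)

section Main

variable {ι : Type*} {S : ι → Type*} [∀ i, MulOneClass (S i)]
  {J : ι → Type*} [∀ i, Preorder (J i)] [∀ i, Nonempty (J i)]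
  {F : ∀ i, J i → Set (S i)} (hfin : ∀ i j, (F i j).Finite) (hne : ∀ i j, (F i j).Nonempty)
  (A : ∀ i, Set (S i))

include hfin hne

lemma uBD_prodNet_le_prod_add (G : Finset ι) {ε : ℝ} (hε : 0 < ε) :
    uBD (prodNet F) (Set.pi Set.univ A) ≤ ∏ i ∈ G, (uBD (F i) (A i) + ε) := by
  choose j₀ hj₀ using fun i =>
    exists_forall_ge_ncard_inter_netShift_le (A := A i) (hfin i) (hne i) hε
  let i₀ : ProdIdx J := ⟨fun i => if i ∈ G then ↑(j₀ i) else ⊥,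
    G.finite_toSet.subset fun i hi => by_contra fun hiG => hi (if_neg hiG)⟩
  refine uBD_le_of_forall_mem_uBDSet fun α hα => ?_
  obtain ⟨j, hj, s, hs⟩ := hα i₀
  set H := j.2.toFinset ∪ G
  have hH : ∀ i ∉ H, j.1 i = ⊥ := fun i hi =>
    by_contra fun h => hi (Finset.mem_union_left _ (j.2.mem_toFinset.mpr h))
  set B := fun i => extNet (F i) (j.1 i)
  have hcoord : ∀ i ∈ H, ((A i ∩ netShift (B i) (s.map (· i))).ncard : ℝ) ≤
      (if i ∈ G then uBD (F i) (A i) + ε else 1) * (B i).ncard := by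
    intro i _
    split_ifs with hiG
    · obtain ⟨k, hk, hjk⟩ := WithBot.coe_le_iff.mp (by simpa [i₀, hiG] using hj i)
      simp only [B, hk, extNet_coe]
      exact hj₀ i k hjk _
    · rw [one_mul]
      exact_mod_cast ncard_inter_netShift_le
        (Set.finite_of_ncard_pos (ncard_extNet_pos (hfin i) (hne i) _)) _ _
  have hBpos : (0 : ℝ) < ∏ i ∈ H, ((B i).ncard : ℝ) :=
    Finset.prod_pos fun i _ => by exact_mod_cast ncard_extNet_pos (hfin i) (hne i) _
  refine le_of_mul_le_mul_right ?_ hBpos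
  calc α * ∏ i ∈ H, ((B i).ncard : ℝ)
      = α * (prodNet F j).ncard := by rw [ncard_prodNet F j hH]; push_cast; rfl
    _ ≤ (Set.pi Set.univ A ∩ netShift (prodNet F j) s).ncard := hs
    _ ≤ ∏ i ∈ H, ((A i ∩ netShift (B i) (s.map (· i))).ncard : ℝ) := by
        exact_mod_cast ncard_univ_pi_inter_netShift_prodNet_le F j hH A s
    _ ≤ ∏ i ∈ H, (if i ∈ G then uBD (F i) (A i) + ε else 1) * (B i).ncard :=
        Finset.prod_le_prod (fun _ _ => by positivity) hcoord
    _ = (∏ i ∈ G, (uBD (F i) (A i) + ε)) * ∏ i ∈ H, ((B i).ncard : ℝ) := by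
        rw [Finset.prod_mul_distrib, Finset.prod_ite_mem,
          Finset.inter_eq_right.mpr Finset.subset_union_right]

lemma uBD_prodNet_le_prod (G : Finset ι) :
    uBD (prodNet F) (Set.pi Set.univ A) ≤ ∏ i ∈ G, uBD (F i) (A i) :=
  le_prod_of_forall_le_prod_add fun _ hε => uBD_prodNet_le_prod_add hfin hne A G hε

lemma le_uBD_prodNet {α : ℝ} (hα : ∀ H : Finset ι, α < ∏ i ∈ H, uBD (F i) (A i)) :
    α ≤ uBD (prodNet F) (Set.pi Set.univ A) := by
  rcases le_or_gt α 0 with hα0 | hα0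
  · exact hα0.trans (uBD_nonneg (prodNet_finite hfin hne) (prodNet_nonempty hne))
  have hαd : ∀ i, α < uBD (F i) (A i) := fun i => by simpa using hα {i}
  have hA : ∀ i, (A i).Nonempty := fun i =>
    nonempty_of_mem_uBDSet (hfin i) (hne i) (mem_uBDSet_of_lt_uBD (hαd i)) hα0
  refine le_uBD (prodNet_finite hfin hne) (prodNet_nonempty hne) fun i₀ => ?_
  obtain ⟨δ, hδ0, hδα, hαδ⟩ := exists_lt_prod_sub hα0 (hα i₀.2.toFinset)
  obtain ⟨j, hj, s, hs⟩ := exists_le_ncard_univ_pi_inter_netShift_prodNet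
    (β := fun i => uBD (F i) (A i) - δ) (fun i => mem_uBDSet_of_lt_uBD (by linarith))
    (fun i => by linarith [hαd i]) hA i₀
  exact ⟨j, hj, s, le_trans (by gcongr) hs⟩

end Main

theorem prodNet_density_pi_general {ι : Type*} [Infinite ι]
    {S : ι → Type*} [∀ i, Monoid (S i)]
    {J : ι → Type*} [∀ i, Preorder (J i)] [∀ i, Nonempty (J i)]
    (F : ∀ i, J i → Set (S i))
    (hfin : ∀ i j, (F i j).Finite) (hne : ∀ i j, (F i j).Nonempty)
    (A : ∀ i, Set (S i)) :
    uBD (prodNet F) (Set.pi Set.univ A) =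
      sInf {x : ℝ | ∃ G : Finset ι, G.Nonempty ∧ x = ∏ i ∈ G, uBD (F i) (A i)} := by
  set T := {x : ℝ | ∃ G : Finset ι, G.Nonempty ∧ x = ∏ i ∈ G, uBD (F i) (A i)}
  obtain ⟨κ⟩ := (inferInstance : Nonempty ι)
  have hκ : uBD (F κ) (A κ) ∈ T := ⟨{κ}, Finset.singleton_nonempty κ, by simp⟩
  have hTbdd : BddBelow T := ⟨0, by
    rintro _ ⟨G, -, rfl⟩
    exact Finset.prod_nonneg fun i _ => uBD_nonneg (hfin i) (hne i)⟩
  refine le_antisymm (le_csInf ⟨_, hκ⟩ ?_) (le_of_forall_lt_imp_le_of_dense fun α hα => ?_)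
  · rintro _ ⟨G, -, rfl⟩
    exact uBD_prodNet_le_prod hfin hne A G
  · refine le_uBD_prodNet hfin hne A fun H => ?_
    rcases H.eq_empty_or_nonempty with rfl | hH
    · simpa using hα.trans_le ((csInf_le hTbdd hκ).trans (uBD_le_one (hfin κ) (hne κ)))
    · exact hα.trans_le (csInf_le hTbdd ⟨H, hH, rfl⟩)

theorem prodNet_density_pi {ι : Type*} [Infinite ι]
    {S : ι → Type*} [∀ i, Monoid (S i)]
    {J : ι → Type*} [∀ i, Preorder (J i)] [∀ i, Nonempty (J i)]
    (F : ∀ i, J i → Set (S i))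
    (hfin : ∀ i j, (F i j).Finite) (hne : ∀ i j, (F i j).Nonempty)
    (hdir : ∀ i, ∀ j k : J i, ∃ l, j ≤ l ∧ k ≤ l)
    (A : ∀ i, Set (S i)) :
    uBD (prodNet F) (Set.pi Set.univ A) =
      sInf {x : ℝ | ∃ G : Finset ι, G.Nonempty ∧ x = ∏ i ∈ G, uBD (F i) (A i)} :=
  prodNet_density_pi_general F hfin hne A
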